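/- arXiv:2509.14083 — 2 statements merged into one kernel-verified Lean document; each statement's English description precedes it below -/
import Mathlib

section
/- Let G be a finite group with subgroups H₁, H₂ that are Gassmann equivalent (|𝒞 ∩ H₁| = |𝒞 ∩ H₂| for all conjugacy classes 𝒞). Let D ≤ G, I ◁ D with D/I cyclic, and choose cyclic C ≤ D with D = CI. Then for every divisor d of |C|, |C^d I\G/H₁| = |C^d I\G/H₂|, where C^d = {x^d : x ∈ C} and C^d I is the subgroup generated. Consequently the multisets of fiber sizes of the projections I\G/Hᵢ → D\G/Hᵢ coincide for i = 1, 2. -/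
/-!
Burnside's lemma for `K × H` acting on `G` by `(k, h) • g = k g h⁻¹` gives
`|K\G/H| |K| |H| = ∑_{k ∈ K} #{g | g⁻¹ k g ∈ H}`, and each summand equals `|C_G(k)| |k^G ∩ H|`,
which Gassmann equivalence preserves; for `K = G` this also gives `|H₁| = |H₂|`. So
`|K\G/H₁| = |K\G/H₂|` for every subgroup `K`.

As `c` normalizes `I`, it permutes `I\G/H`, and the double cosets of `⟨c^m⟩I` are the orbits of
`c^m` there; those of `D = ⟨c⟩I` are the `c`-orbits, i.e. the fibres of `I\G/H → D\G/H`. A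
`c`-orbit of size `e` splits into `gcd(m, e)` orbits of `c^m`, so `|⟨c^m⟩I\G/H| = ∑_q gcd(m, e_q)`.
Since `gcd(m, e) = ∑_{d ∣ m, d ∣ e} φ(d)`, these sums for all `m` determine how many fibre sizes
each `d` divides, and these numbers determine the multiset of fibre sizes by downward induction.
-/

open Finset MulAction
open scoped Classical

section Gassmann

variable {G : Type*} [Group G]

def GassmannEquivalent (H₁ H₂ : Subgroup G) : Prop :=
  ∀ g : G, Set.ncard ({x | IsConj g x} ∩ (H₁ : Set G)) = Set.ncard ({x | IsConj g x} ∩ (H₂ : Set G))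

lemma DoubleCoset.card_quotient_top (H : Subgroup G) :
    Nat.card (DoubleCoset.Quotient ((⊤ : Subgroup G) : Set G) H) = 1 :=
  Nat.card_eq_one_iff_unique.2 ⟨⟨fun x y => Quotient.inductionOn₂ x y fun a b =>
    (DoubleCoset.eq _ _ a b).2 ⟨b * a⁻¹, Subgroup.mem_top _, 1, one_mem _, by group⟩⟩,
    inferInstance⟩

variable [Fintype G]

lemma card_conj_eq_of_isConj {k y : G} (h : IsConj k y) :
    #{g | g⁻¹ * k * g = y} = #{g | g⁻¹ * k * g = k} := by
  obtain ⟨u, rfl⟩ := isConj_iff.1 h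
  refine card_equiv (Equiv.mulRight u) fun g => ?_
  simp only [mem_filter, mem_univ, true_and, Equiv.coe_mulRight]
  rw [show (g * u)⁻¹ * k * (g * u) = u⁻¹ * (g⁻¹ * k * g) * u by group]
  constructor
  · intro h
    rw [h]
    group
  · intro h
    calc g⁻¹ * k * g = u * (u⁻¹ * (g⁻¹ * k * g) * u) * u⁻¹ := by group
      _ = u * k * u⁻¹ := by rw [h]

lemma card_conj_mem_eq_mul (k : G) (H : Subgroup G) :
    #{g | g⁻¹ * k * g ∈ H} = #{y | IsConj k y ∧ y ∈ H} * #{g | g⁻¹ * k * g = k} := by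
  rw [card_eq_sum_card_fiberwise (f := fun g => g⁻¹ * k * g) (t := {y | IsConj k y ∧ y ∈ H})
    fun g hg => by
      simp only [coe_filter, mem_univ, true_and, Set.mem_ofPred_eq] at hg ⊢
      exact ⟨isConj_iff.2 ⟨g⁻¹, by group⟩, hg⟩]
  refine sum_const_nat fun y hy => ?_
  rw [mem_filter] at hy
  rw [filter_filter, ← card_conj_eq_of_isConj hy.2.1]
  exact congrArg card (filter_congr fun g _ => ⟨And.right, fun h => ⟨h ▸ hy.2.2, h⟩⟩)

lemma GassmannEquivalent.card_conj_mem_eq {H₁ H₂ : Subgroup G} (h : GassmannEquivalent H₁ H₂)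
    (k : G) : #{g | g⁻¹ * k * g ∈ H₁} = #{g | g⁻¹ * k * g ∈ H₂} := by
  have hncard : ∀ H : Subgroup G,
      #{y | IsConj k y ∧ y ∈ H} = Set.ncard ({x | IsConj k x} ∩ (H : Set G)) := fun H => by
    rw [← Set.ncard_coe_finset]
    congr
    ext
    simp
  rw [card_conj_mem_eq_mul k H₁, card_conj_mem_eq_mul k H₂, hncard, hncard, h k]

lemma sum_card_conj_eq_card_conj_mem (k : G) (H : Subgroup G) :
    ∑ h : H, #{g | g⁻¹ * k * g = h} = #{g | g⁻¹ * k * g ∈ H} := by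
  rw [← sum_subtype {y | y ∈ H} (by simp) (fun y => #{g | g⁻¹ * k * g = y}),
    card_eq_sum_card_fiberwise (f := fun g => g⁻¹ * k * g) (t := {y | y ∈ H})
      fun g hg => by simpa using hg]
  refine sum_congr rfl fun h hh => ?_
  rw [filter_filter]
  exact congrArg card
    (filter_congr fun g _ => ⟨fun hg => ⟨hg ▸ (mem_filter.1 hh).2, hg⟩, And.right⟩)

abbrev doubleCosetAction (K H : Subgroup G) : MulAction (K × H) G where
  smul p g := p.1 * g * (p.2 : G)⁻¹
  one_smul g := by simp [HSMul.hSMul]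
  mul_smul p q g := by simp [HSMul.hSMul, mul_assoc]

namespace DoubleCoset

lemma card_quotient_mul_card_mul_card (K H : Subgroup G) :
    Nat.card (Quotient (K : Set G) H) * (Nat.card K * Nat.card H) =
      ∑ k : K, #{g | g⁻¹ * (k : G) * g ∈ H} := by
  let _ := doubleCosetAction K H
  have e : orbitRel.Quotient (K × H) G ≃ Quotient (K : Set G) H :=
    Quotient.congrRight fun a b => by
      rw [orbitRel_apply, rel_iff, mem_orbit_iff]
      constructor
      · rintro ⟨⟨k, h⟩, rfl⟩
        exact ⟨k⁻¹, inv_mem k.2, h, h.2, by show b = (k : G)⁻¹ * (k * b * (h : G)⁻¹) * h; group⟩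
      · rintro ⟨k, hk, h, hh, rfl⟩
        exact ⟨(⟨k⁻¹, inv_mem hk⟩, ⟨h, hh⟩), by show k⁻¹ * (k * a * h) * h⁻¹ = a; group⟩
  have hfix : ∀ p : K × H, Fintype.card (fixedBy G p) = #{g | g⁻¹ * (p.1 : G) * g = p.2} := by
    rintro ⟨k, h⟩
    rw [← Fintype.card_subtype]
    refine Fintype.card_congr (Equiv.subtypeEquivRight fun g => ?_)
    show k * g * (h : G)⁻¹ = g ↔ g⁻¹ * k * g = h
    rw [mul_inv_eq_iff_eq_mul, mul_assoc, ← inv_mul_eq_iff_eq_mul]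
  rw [Nat.card_congr e.symm, Nat.card_eq_fintype_card, Nat.card_eq_fintype_card,
    Nat.card_eq_fintype_card, ← Fintype.card_prod,
    ← sum_card_fixedBy_eq_card_orbits_mul_card_group, Fintype.sum_prod_type]
  simp only [hfix, sum_card_conj_eq_card_conj_mem]

end DoubleCoset

lemma GassmannEquivalent.card_eq {H₁ H₂ : Subgroup G} (h : GassmannEquivalent H₁ H₂) :
    Nat.card H₁ = Nat.card H₂ := by
  have h₁ := DoubleCoset.card_quotient_mul_card_mul_card ⊤ H₁
  have h₂ := DoubleCoset.card_quotient_mul_card_mul_card ⊤ H₂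
  rw [DoubleCoset.card_quotient_top, one_mul,
    Fintype.sum_congr _ _ fun k : (⊤ : Subgroup G) => h.card_conj_mem_eq k] at h₁
  rw [DoubleCoset.card_quotient_top, one_mul] at h₂
  exact Nat.eq_of_mul_eq_mul_left Nat.card_pos (h₁.trans h₂.symm)

lemma GassmannEquivalent.card_quotient_eq {H₁ H₂ : Subgroup G} (h : GassmannEquivalent H₁ H₂)
    (K : Subgroup G) :
    Nat.card (DoubleCoset.Quotient (K : Set G) H₁) =
      Nat.card (DoubleCoset.Quotient (K : Set G) H₂) := by
  have h₁ := DoubleCoset.card_quotient_mul_card_mul_card K H₁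
  have h₂ := DoubleCoset.card_quotient_mul_card_mul_card K H₂
  rw [h.card_eq, Fintype.sum_congr _ _ fun k : K => h.card_conj_mem_eq k] at h₁
  exact Nat.eq_of_mul_eq_mul_right (Nat.mul_pos Nat.card_pos Nat.card_pos) (h₁.trans h₂.symm)

end Gassmann

namespace DoubleCoset

variable {G : Type*} [Group G] (H : Subgroup G)

instance (I : Subgroup G) :
    MulAction (Subgroup.normalizer (I : Set G)) (Quotient (I : Set G) H) where
  smul n := Quotient.map' ((n : G) * ·) fun a b hab => by
    obtain ⟨i, hi, h, hh, rfl⟩ := rel_iff.1 hab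
    exact rel_iff.2
      ⟨n * i * (n : G)⁻¹, (Subgroup.mem_normalizer_iff.1 n.2 i).1 hi, h, hh, by group⟩
  one_smul := by rintro ⟨g⟩; exact congrArg (mk I H) (one_mul g)
  mul_smul n n' := by rintro ⟨g⟩; exact congrArg (mk I H) (mul_assoc _ _ g)

def map {J K : Subgroup G} (hJK : J ≤ K) : Quotient (J : Set G) H → Quotient (K : Set G) H :=
  Quotient.map' id fun a b hab => by
    obtain ⟨j, hj, h, hh, rfl⟩ := rel_iff.1 hab
    exact rel_iff.2 ⟨j, hJK hj, h, hh, rfl⟩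

variable {H}

lemma mk_surjective (K : Subgroup G) : Function.Surjective (mk K H) :=
  fun q => ⟨q.out, out_eq' K H q⟩

lemma map_map {J K L : Subgroup G} (hJK : J ≤ K) (hKL : K ≤ L) (x : Quotient (J : Set G) H) :
    map H hKL (map H hJK x) = map H (hJK.trans hKL) x := by
  obtain ⟨g, rfl⟩ := mk_surjective J x
  rfl

lemma map_surjective {J K : Subgroup G} (hJK : J ≤ K) : Function.Surjective (map H hJK) := by
  intro q
  obtain ⟨g, rfl⟩ := mk_surjective K q
  exact ⟨mk J H g, rfl⟩

lemma setOf_exists_mk_eq {J K : Subgroup G} (hJK : J ≤ K) (q : Quotient (K : Set G) H) :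
    {x : Quotient (J : Set G) H | ∃ g, x = mk J H g ∧ mk K H g = q} = {x | map H hJK x = q} := by
  ext x
  obtain ⟨g, rfl⟩ := mk_surjective J x
  constructor
  · rintro ⟨g', hg, rfl⟩
    exact congrArg (map H hJK) hg
  · exact fun hq => ⟨g, rfl, hq⟩

lemma map_sup_eq_map_sup_iff {I : Subgroup G} (a : Subgroup.normalizer (I : Set G))
    (x y : Quotient (I : Set G) H) :
    map H (le_sup_right : I ≤ Subgroup.zpowers (a : G) ⊔ I) x = map H le_sup_right y ↔
      y ∈ orbit (Subgroup.zpowers a) x := by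
  obtain ⟨g, rfl⟩ := mk_surjective I x
  obtain ⟨g', rfl⟩ := mk_surjective I y
  have hsup : ∀ z, z ∈ Subgroup.zpowers (a : G) ⊔ I ↔ ∃ n : ℤ, ∃ i ∈ I, (a : G) ^ n * i = z :=
    fun z => by
      rw [← SetLike.mem_coe, Subgroup.coe_mul_of_left_le_normalizer_right _ _
        (Subgroup.zpowers_le.2 a.2), Set.mem_mul]
      simp [Subgroup.mem_zpowers_iff]
  rw [mem_orbit_iff, Subgroup.exists_zpowers]
  change mk _ H g = mk _ H g' ↔ ∃ n : ℤ, mk I H ((a : G) ^ n * g) = mk I H g'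
  simp only [DoubleCoset.eq, hsup]
  have ha : ∀ n : ℤ, (a : G) ^ n ∈ Subgroup.normalizer (I : Set G) := fun n => zpow_mem a.2 n
  constructor
  · rintro ⟨_, ⟨n, i, hi, rfl⟩, h, hh, rfl⟩
    exact ⟨n, (a : G) ^ n * i * ((a : G) ^ n)⁻¹,
      (Subgroup.mem_normalizer_iff.1 (ha n) i).1 hi, h, hh, by group⟩
  · rintro ⟨n, i, hi, h, hh, rfl⟩
    exact ⟨_, ⟨n, ((a : G) ^ n)⁻¹ * i * (a : G) ^ n,
      (Subgroup.mem_normalizer_iff''.1 (ha n) i).1 hi, rfl⟩, h, hh, by group⟩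

noncomputable instance [Fintype G] (J K : Set G) : Fintype (Quotient J K) := Quotient.fintype _

variable [Fintype G]

lemma card_fiber_map_pos {J K : Subgroup G} (hJK : J ≤ K) (q : Quotient (K : Set G) H) :
    0 < #{x | map H hJK x = q} := by
  obtain ⟨x, rfl⟩ := map_surjective hJK q
  exact card_pos.2 ⟨x, by simp⟩

lemma card_fiber_map_trans {J K L : Subgroup G} (hJK : J ≤ K) (hKL : K ≤ L)
    (q : Quotient (L : Set G) H) :
    #{x | map H (hJK.trans hKL) x = q} = ∑ y ∈ {y | map H hKL y = q}, #{x | map H hJK x = y} := by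
  rw [card_eq_sum_card_fiberwise (f := map H hJK) (t := {y | map H hKL y = q})
    fun x hx => by simpa [map_map] using hx]
  refine sum_congr rfl fun y hy => ?_
  rw [filter_filter]
  refine congrArg card (filter_congr fun x _ => ⟨And.right, fun h => ⟨?_, h⟩⟩)
  rw [← map_map hJK hKL, h, (mem_filter.1 hy).2]

variable {I : Subgroup G}

lemma card_fiber_map_sup_zpowers_eq_minimalPeriod (a : Subgroup.normalizer (I : Set G))
    (x : Quotient (I : Set G) H) :
    #{y | map H (le_sup_right : I ≤ Subgroup.zpowers (a : G) ⊔ I) y = map H le_sup_right x} =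
      Function.minimalPeriod (a • ·) x := by
  rw [minimalPeriod_eq_card, ← Set.toFinset_card]
  congr 1
  ext y
  simp [eq_comm, map_sup_eq_map_sup_iff a x y]

lemma card_fiber_map_sup_zpowers_pow_eq_gcd (a : Subgroup.normalizer (I : Set G)) (m : ℕ)
    (hle : Subgroup.zpowers ((a : G) ^ m) ⊔ I ≤ Subgroup.zpowers (a : G) ⊔ I)
    (q : Quotient ((Subgroup.zpowers (a : G) ⊔ I : Subgroup G) : Set G) H) :
    #{y | map H hle y = q} = m.gcd #{x | map H (le_sup_right : I ≤ _) x = q} := by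
  obtain ⟨x₀, rfl⟩ := map_surjective le_sup_right q
  set e := #{x | map H (le_sup_right : I ≤ _) x = map H le_sup_right x₀}
  have he : 0 < e := card_fiber_map_pos _ _
  have hfib : ∀ y ∈ ({y | map H hle y = map H le_sup_right x₀} : Finset _),
      #{x | map H (le_sup_right : I ≤ _) x = y} = e / e.gcd m := fun y hy => by
    obtain ⟨x, rfl⟩ := map_surjective le_sup_right y
    have hx : map H (le_sup_right : I ≤ Subgroup.zpowers (a : G) ⊔ I) x =
        map H le_sup_right x₀ := by
      rw [← (mem_filter.1 hy).2, map_map]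
    have hperiodic : x ∈ Function.periodicPts (a • ·) :=
      Function.minimalPeriod_pos_iff_mem_periodicPts.1 (NeZero.pos _)
    calc _ = Function.minimalPeriod ((a ^ m) • ·) x :=
          card_fiber_map_sup_zpowers_eq_minimalPeriod (a ^ m) x
      _ = Function.minimalPeriod (a • ·) x / (Function.minimalPeriod (a • ·) x).gcd m := by
          rw [← smul_iterate, Function.minimalPeriod_iterate_eq_div_gcd' hperiodic]
      _ = e / e.gcd m := by rw [← card_fiber_map_sup_zpowers_eq_minimalPeriod a x, hx]
  have hsum := card_fiber_map_trans le_sup_right hle (map H le_sup_right x₀)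
  rw [sum_const_nat hfib] at hsum
  rw [Nat.gcd_comm]
  refine Nat.eq_of_mul_eq_mul_right (Nat.div_pos (Nat.gcd_le_left m he)
    (Nat.gcd_pos_of_pos_left m he)) ?_
  rw [Nat.mul_div_cancel' (Nat.gcd_dvd_left e m)]
  exact hsum.symm

lemma card_quotient_sup_zpowers_pow_eq_sum_gcd (a : Subgroup.normalizer (I : Set G)) (m : ℕ) :
    Nat.card (Quotient ((Subgroup.zpowers ((a : G) ^ m) ⊔ I : Subgroup G) : Set G) H) =
      ∑ q : Quotient ((Subgroup.zpowers (a : G) ⊔ I : Subgroup G) : Set G) H,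
        m.gcd #{x | map H (le_sup_right : I ≤ _) x = q} := by
  have hle : Subgroup.zpowers ((a : G) ^ m) ⊔ I ≤ Subgroup.zpowers (a : G) ⊔ I :=
    sup_le_sup_right (Subgroup.zpowers_le.2 (pow_mem (Subgroup.mem_zpowers _) m)) I
  rw [Nat.card_eq_fintype_card, ← card_univ,
    card_eq_sum_card_fiberwise (f := map H hle) (t := univ) fun _ _ => mem_coe.2 (mem_univ _)]
  exact sum_congr rfl fun q _ => card_fiber_map_sup_zpowers_pow_eq_gcd a m hle q

end DoubleCoset

lemma Nat.gcd_eq_sum_totient {m : ℕ} (hm : m ≠ 0) (e : ℕ) :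
    m.gcd e = ∑ d ∈ m.divisors with d ∣ e, d.totient := by
  rw [← Nat.sum_totient (m.gcd e)]
  congr 1
  ext d
  simp [Nat.dvd_gcd_iff, hm]

section GcdSums

variable {α β : Type*} [Fintype α] [Fintype β]

lemma sum_gcd_eq_sum_totient_mul_card (E : α → ℕ) {m : ℕ} (hm : m ≠ 0) :
    ∑ a, m.gcd (E a) = ∑ d ∈ m.divisors, d.totient * #{a | d ∣ E a} := by
  simp_rw [Nat.gcd_eq_sum_totient hm, sum_filter]
  rw [sum_comm]
  refine sum_congr rfl fun d _ => ?_
  rw [← sum_filter, sum_const, smul_eq_mul, mul_comm]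

lemma card_dvd_eq_of_sum_gcd_eq {E₁ : α → ℕ} {E₂ : β → ℕ}
    (h : ∀ m ≠ 0, ∑ a, m.gcd (E₁ a) = ∑ b, m.gcd (E₂ b)) {d : ℕ} (hd : d ≠ 0) :
    #{a | d ∣ E₁ a} = #{b | d ∣ E₂ b} := by
  induction d using Nat.strong_induction_on with | _ d ih => ?_
  have hsum := h d hd
  have hdd := Nat.mem_divisors_self d hd
  rw [sum_gcd_eq_sum_totient_mul_card E₁ hd, sum_gcd_eq_sum_totient_mul_card E₂ hd,
    ← add_sum_erase _ _ hdd, ← add_sum_erase _ _ hdd, sum_congr rfl fun d' hd' => ?_] at hsum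
  · exact Nat.eq_of_mul_eq_mul_left (Nat.totient_pos.2 (Nat.pos_of_ne_zero hd))
      (Nat.add_right_cancel hsum)
  obtain ⟨hne, hd'⟩ := mem_erase.1 hd'
  rw [ih d' (lt_of_le_of_ne (Nat.divisor_le hd') hne) (Nat.pos_of_mem_divisors hd').ne']

lemma card_dvd_eq_sum_card_eq (E : α → ℕ) {t : Finset ℕ} (ht : ∀ a, E a ∈ t) (k : ℕ) :
    #{a | k ∣ E a} = ∑ j ∈ t with k ∣ j, #{a | E a = j} := by
  rw [card_eq_sum_card_fiberwise (f := E) (t := {j ∈ t | k ∣ j})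
    fun a ha => mem_filter.2 ⟨ht a, (mem_filter.1 ha).2⟩]
  refine sum_congr rfl fun j hj => ?_
  rw [filter_filter]
  exact congrArg card
    (filter_congr fun a _ => ⟨And.right, fun h => ⟨h ▸ (mem_filter.1 hj).2, h⟩⟩)

theorem card_eq_of_sum_gcd_eq {E₁ : α → ℕ} {E₂ : β → ℕ} (h₁ : ∀ a, E₁ a ≠ 0)
    (h₂ : ∀ b, E₂ b ≠ 0) (h : ∀ m ≠ 0, ∑ a, m.gcd (E₁ a) = ∑ b, m.gcd (E₂ b)) (k : ℕ) :
    #{a | E₁ a = k} = #{b | E₂ b = k} := by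
  set t := univ.image E₁ ∪ univ.image E₂
  have ht₁ : ∀ a, E₁ a ∈ t := fun a => mem_union_left _ (mem_image_of_mem _ (mem_univ a))
  have ht₂ : ∀ b, E₂ b ∈ t := fun b => mem_union_right _ (mem_image_of_mem _ (mem_univ b))
  have ht : ∀ j ∈ t, j ≠ 0 := fun j hj => by
    rcases mem_union.1 hj with hj | hj <;> obtain ⟨_, _, rfl⟩ := mem_image.1 hj
    exacts [h₁ _, h₂ _]
  have hout : ∀ j ∉ t, #{a | E₁ a = j} = #{b | E₂ b = j} := fun j hj => by
    rw [card_eq_zero.2 (filter_false_of_mem fun a _ => ne_of_mem_of_not_mem (ht₁ a) hj),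
      card_eq_zero.2 (filter_false_of_mem fun b _ => ne_of_mem_of_not_mem (ht₂ b) hj)]
  refine Nat.strong_decreasing_induction
    ⟨t.sup id, fun j hj => hout j fun hjt => not_le.2 hj (le_sup (f := id) hjt)⟩
    (fun k ih => ?_) k
  by_cases hk : k ∈ t
  swap; · exact hout k hk
  have hkt : k ∈ {j ∈ t | k ∣ j} := mem_filter.2 ⟨hk, dvd_rfl⟩
  have hdvd := card_dvd_eq_of_sum_gcd_eq h (ht k hk)
  rw [card_dvd_eq_sum_card_eq E₁ ht₁, card_dvd_eq_sum_card_eq E₂ ht₂,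
    ← add_sum_erase _ _ hkt, ← add_sum_erase _ _ hkt, sum_congr rfl fun j hj => ?_] at hdvd
  · exact Nat.add_right_cancel hdvd
  obtain ⟨hjk, hj⟩ := mem_erase.1 hj
  obtain ⟨hjt, hkj⟩ := mem_filter.1 hj
  exact ih j (lt_of_le_of_ne (Nat.le_of_dvd (Nat.pos_of_ne_zero (ht j hjt)) hkj) hjk.symm)

end GcdSums

/-- Let `H₁, H₂` be Gassmann-equivalent subgroups of a finite group `G`, let
`D ≤ G`, `I ◁ D` with `D/I` cyclic, and `C = ⟨c⟩ ≤ D` cyclic with `D = C·I`.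
Then for every divisor `d` of `|C|`, `|C^d I\G/H₁| = |C^d I\G/H₂|` (where
`C^d I = ⟨c^d⟩ ⊔ I`), and consequently the multisets of fiber sizes of the
projections `I\G/Hᵢ → D\G/Hᵢ` coincide for `i = 1, 2`. -/
theorem doset_counts_and_fiber_multisets_of_gassmann
    (G : Type*) [Group G] [Fintype G] (H₁ H₂ D I : Subgroup G) (c : G)
    (hgass : ∀ g : G,
      Set.ncard ({x | IsConj g x} ∩ (H₁ : Set G)) =
        Set.ncard ({x | IsConj g x} ∩ (H₂ : Set G)))
    (hID : I ≤ D)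
    (hnormal : ∀ d ∈ D, ∀ i ∈ I, d * i * d⁻¹ ∈ I)
    (hc : c ∈ D)
    (hCI : ∀ d ∈ D, ∃ m : ℤ, ∃ i ∈ I, d = c ^ m * i) :
    (∀ d : ℕ, d ∣ orderOf c →
      Nat.card (DoubleCoset.Quotient ((Subgroup.zpowers (c ^ d) ⊔ I : Subgroup G) : Set G)
          (H₁ : Set G)) =
        Nat.card (DoubleCoset.Quotient ((Subgroup.zpowers (c ^ d) ⊔ I : Subgroup G) : Set G)
          (H₂ : Set G))) ∧
    (∀ k : ℕ,
      Set.ncard {q : DoubleCoset.Quotient (D : Set G) (H₁ : Set G) |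
          Set.ncard {x : DoubleCoset.Quotient (I : Set G) (H₁ : Set G) |
            ∃ g : G, x = DoubleCoset.mk I H₁ g ∧ DoubleCoset.mk D H₁ g = q} = k} =
        Set.ncard {q : DoubleCoset.Quotient (D : Set G) (H₂ : Set G) |
          Set.ncard {x : DoubleCoset.Quotient (I : Set G) (H₂ : Set G) |
            ∃ g : G, x = DoubleCoset.mk I H₂ g ∧ DoubleCoset.mk D H₂ g = q} = k}) := by
  let a : Subgroup.normalizer (I : Set G) :=
    ⟨c, Subgroup.mem_normalizer_fintype fun i hi => hnormal c hc i hi⟩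
  obtain rfl : D = Subgroup.zpowers c ⊔ I := by
    refine le_antisymm (fun d hd => ?_) (sup_le (Subgroup.zpowers_le.2 hc) hID)
    obtain ⟨m, i, hi, rfl⟩ := hCI d hd
    exact mul_mem (Subgroup.mem_sup_left (Subgroup.zpow_mem_zpowers c m))
      (Subgroup.mem_sup_right hi)
  refine ⟨fun d _ => GassmannEquivalent.card_quotient_eq hgass _, fun k => ?_⟩
  simp only [DoubleCoset.setOf_exists_mk_eq hID, Set.ncard_eq_toFinset_card',
    Set.toFinset_ofPred]
  refine card_eq_of_sum_gcd_eq (fun q => (DoubleCoset.card_fiber_map_pos hID q).ne')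
    (fun q => (DoubleCoset.card_fiber_map_pos hID q).ne') (fun m _ => ?_) k
  exact (DoubleCoset.card_quotient_sup_zpowers_pow_eq_sum_gcd a m).symm.trans
    ((GassmannEquivalent.card_quotient_eq hgass _).trans
      (DoubleCoset.card_quotient_sup_zpowers_pow_eq_sum_gcd a m))
end

section
/- Let G be a finite group, H ≤ G, and K ≤ G any subgroup. Then |K\G/H| = (1/(|K|·|H|)) · Σ over conjugacy classes 𝒞 of G of (|G|/|𝒞|) · |𝒞 ∩ K| · |𝒞 ∩ H|. -/
/-!
Let `K × H` act on `G` by `(k, h) • g = k * g * h⁻¹`; its orbits are the double cosets `K g H`.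
By Burnside's lemma `|K\G/H| · |K| · |H|` is the number of fixed points, i.e. of triples
`(k, h, g)` with `g h g⁻¹ = k`. For fixed `h` these are counted by the orbit-stabilizer theorem for
conjugation: `#{g | g h g⁻¹ ∈ K} = |C_G(h)| · |cl(h) ∩ K|` with `|C_G(h)| = |G| / |cl(h)|`.
Summing over `h ∈ H` class by class gives the formula.
-/

open MulAction Finset

theorem Nat.card_subtype_mem_eq_sum_card_fiber {α β : Type*} [Finite α] (f : α → β) (S : Set β)
    [Fintype S] : Nat.card {a // f a ∈ S} = ∑ s : S, Nat.card {a // f a = s} := by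
  rw [← Nat.card_sigma, Nat.card_congr (Equiv.sigmaSubtypeFiberEquivSubtype f fun _ => Iff.rfl)]

namespace MulAction

variable (G : Type*) {X : Type*} [Group G] [MulAction G X]

theorem sum_card_fixedBy_eq_card_orbits_mul_nat_card_group [Fintype G] [Finite X] :
    ∑ g : G, Nat.card (fixedBy X g) = Nat.card (orbitRel.Quotient G X) * Nat.card G := by
  classical
  have := Fintype.ofFinite X
  have := Fintype.ofFinite (orbitRel.Quotient G X)
  simp only [Nat.card_eq_fintype_card]
  convert sum_card_fixedBy_eq_card_orbits_mul_card_group G X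

theorem card_setOf_smul_mem (x : X) (S : Set X) :
    Nat.card {g : G | g • x ∈ S} = Nat.card (stabilizer G x) * (orbit G x ∩ S).ncard := by
  change Nat.card (QuotientGroup.mk ⁻¹' (ofQuotientStabilizer G x ⁻¹' S)) = _
  rw [QuotientGroup.card_preimage_mk, Nat.card_coe_set_eq,
    ← Set.ncard_image_of_injective _ (injective_ofQuotientStabilizer G x),
    Set.image_preimage_eq_range_inter, ← QuotientGroup.mk_surjective.range_comp]
  rfl

end MulAction

section Conjugation

variable {G : Type*} [Group G]

theorem card_setOf_conj_mem [Finite G] (x : G) (S : Set G) :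
    (Nat.card {g : G | g * x * g⁻¹ ∈ S} : ℚ) =
      Nat.card G / (ConjClasses.mk x).carrier.ncard * ((ConjClasses.mk x).carrier ∩ S).ncard := by
  have hcard : Nat.card {g : G | g * x * g⁻¹ ∈ S} * (ConjClasses.mk x).carrier.ncard =
      Nat.card G * ((ConjClasses.mk x).carrier ∩ S).ncard := by
    change Nat.card {g : ConjAct G | g • x ∈ S} * _ = _
    rw [card_setOf_smul_mem, ← ConjAct.orbit_eq_carrier_conjClasses, mul_right_comm,
      ← index_stabilizer, Subgroup.card_mul_index]
    rfl
  have hclass : ((ConjClasses.mk x).carrier.ncard : ℚ) ≠ 0 := by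
    exact_mod_cast ((Set.ncard_pos (Set.toFinite _)).2 ⟨x, ConjClasses.mem_carrier_mk⟩).ne'
  rw [div_mul_eq_mul_div, eq_div_iff hclass]
  exact_mod_cast hcard

theorem ConjClasses.ncard_carrier_inter_eq_card_filter (H : Subgroup G) [Fintype H]
    [DecidableEq (ConjClasses G)] (𝒞 : ConjClasses G) :
    (𝒞.carrier ∩ H).ncard = #{h : H | ConjClasses.mk (h : G) = 𝒞} := by
  rw [← Nat.card_coe_set_eq, ← Fintype.card_subtype, ← Nat.card_eq_fintype_card]
  exact Nat.card_congr <| (Equiv.subtypeEquivRight fun x => by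
    simp [ConjClasses.mem_carrier_iff_mk_eq, and_comm]).trans
    (Equiv.subtypeSubtypeEquivSubtypeInter (· ∈ H) fun x => ConjClasses.mk x = 𝒞).symm

theorem Subgroup.sum_comp_conjClassesMk {M : Type*} [AddCommMonoid M] (H : Subgroup G)
    [Fintype H] [Fintype (ConjClasses G)] (f : ConjClasses G → M) :
    ∑ h : H, f (ConjClasses.mk h) = ∑ 𝒞 : ConjClasses G, (𝒞.carrier ∩ H).ncard • f 𝒞 := by
  classical
  rw [← sum_fiberwise univ fun h : H => ConjClasses.mk (h : G)]
  refine sum_congr rfl fun 𝒞 _ => ?_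
  rw [sum_congr rfl fun h hh => congrArg f (mem_filter.1 hh).2, sum_const,
    ConjClasses.ncard_carrier_inter_eq_card_filter]

end Conjugation

namespace Subgroup

variable {G : Type*} [Group G] (K H : Subgroup G)

abbrev doubleCosetAction : MulAction (K × H) G where
  smul p g := p.1 * g * (p.2 : G)⁻¹
  one_smul g := by simp [HSMul.hSMul]
  mul_smul p q g := by simp [HSMul.hSMul, mul_assoc]

attribute [local instance] doubleCosetAction

theorem doubleCosetAction_smul_def (p : K × H) (g : G) : p • g = p.1 * g * (p.2 : G)⁻¹ := rfl

theorem orbitRel_doubleCosetAction : orbitRel (K × H) G = DoubleCoset.setoid K H := by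
  ext a b
  rw [orbitRel_apply, mem_orbit_iff, DoubleCoset.rel_iff]
  constructor
  · rintro ⟨⟨k, h⟩, rfl⟩
    exact ⟨k⁻¹, inv_mem k.2, h, h.2, by simp [doubleCosetAction_smul_def, mul_assoc]⟩
  · rintro ⟨k, hk, h, hh, rfl⟩
    exact ⟨⟨⟨k⁻¹, inv_mem hk⟩, ⟨h, hh⟩⟩, by simp [doubleCosetAction_smul_def, mul_assoc]⟩

theorem card_doubleCoset_quotient_mul [Fintype G] [Fintype H] :
    Nat.card (DoubleCoset.Quotient (K : Set G) H) * (Nat.card K * Nat.card H) =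
      ∑ h : H, Nat.card {g : G | g * h * g⁻¹ ∈ K} := by
  classical
  have hfix (k : K) (h : H) : fixedBy G (k, h) = {g : G | g * h * g⁻¹ = k} := by
    ext g
    simp [doubleCosetAction_smul_def, eq_mul_inv_iff_mul_eq, eq_comm]
  rw [← Nat.card_prod, DoubleCoset.Quotient, ← orbitRel_doubleCosetAction,
    ← sum_card_fixedBy_eq_card_orbits_mul_nat_card_group, Fintype.sum_prod_type_right]
  refine sum_congr rfl fun h _ => ?_
  simp only [hfix]
  exact (Nat.card_subtype_mem_eq_sum_card_fiber (fun g : G => g * h * g⁻¹) K).symm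

end Subgroup

open DoubleCoset

/-- For subgroups `H, K` of a finite group `G`, the number of double cosets is
`|K\G/H| = (1/(|K||H|)) · ∑_{𝒞} (|G|/|𝒞|) · |𝒞 ∩ K| · |𝒞 ∩ H|`, the sum ranging
over the conjugacy classes `𝒞` of `G`. -/
theorem card_dosets_eq_sum_over_conj_classes
    (G : Type*) [Group G] [Fintype G] [DecidableEq G] (H K : Subgroup G) :
    (Nat.card (DoubleCoset.Quotient (K : Set G) (H : Set G)) : ℚ) =
      (1 / ((Nat.card K : ℚ) * (Nat.card H : ℚ))) *
        ∑ 𝒞 : ConjClasses G,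
          ((Nat.card G : ℚ) / (𝒞.carrier.ncard : ℚ)) *
            (Set.ncard (𝒞.carrier ∩ (K : Set G)) : ℚ) *
            (Set.ncard (𝒞.carrier ∩ (H : Set G)) : ℚ) := by
  have := Fintype.ofFinite H
  have hKH : (Nat.card K * Nat.card H : ℚ) ≠ 0 := 
    mul_ne_zero (Nat.cast_ne_zero.2 Nat.card_pos.ne') (Nat.cast_ne_zero.2 Nat.card_pos.ne')
  rw [one_div, eq_inv_mul_iff_mul_eq₀ hKH, mul_comm]
  calc (Nat.card (Quotient (K : Set G) H) * (Nat.card K * Nat.card H) : ℚ)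
      = ∑ h : H, (Nat.card {g : G | g * h * g⁻¹ ∈ K} : ℚ) := by
        exact_mod_cast K.card_doubleCoset_quotient_mul H
    _ = ∑ h : H, (Nat.card G / (ConjClasses.mk (h : G)).carrier.ncard *
          ((ConjClasses.mk (h : G)).carrier ∩ K).ncard : ℚ) :=
        sum_congr rfl fun h _ => card_setOf_conj_mem (h : G) K
    _ = ∑ 𝒞 : ConjClasses G, (𝒞.carrier ∩ H).ncard • (Nat.card G / 𝒞.carrier.ncard *
          (𝒞.carrier ∩ K).ncard : ℚ) :=
        H.sum_comp_conjClassesMk fun 𝒞 => (Nat.card G / 𝒞.carrier.ncard * (𝒞.carrier ∩ K).ncard : ℚ)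
    _ = _ := sum_congr rfl fun 𝒞 _ => by rw [nsmul_eq_mul]; ring
end
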